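/- Let g: ℝⁿ → ℝ ∪ {+∞} be a lower semicontinuous function with dom g unbounded, and let S := {x ∈ ℝⁿ : g(x) ≤ 0} be nonempty, closed and unbounded. Assume S has an error bound at infinity: there exist α > 0 and R > 0 such that d(x;S) ≤ α·max(g(x),0) for all x ∈ ℝⁿ with ‖x‖ > R. Then N(∞;S) ⊆ ⋃_{λ ≥ 0} λ∘∂g(∞), i.e., N(∞;S) ⊆ (⋃_{λ > 0} λ·∂g(∞)) ∪ ∂^∞g(∞). -/

import Mathlib

open Filter Topology Set Pointwise RealInnerProductSpace

noncomputable section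

variable {E : Type*} [NormedAddCommGroup E] [InnerProductSpace ℝ E]

/-- The Fréchet (regular) normal cone to `Ω` at `x`:
`{v | limsup_{y→x, y∈Ω} ⟪v, y-x⟫/‖y-x‖ ≤ 0}`, empty if `x ∉ Ω`. -/
def FrechetNormalCone (Ω : Set E) (x : E) : Set E :=
  {v | x ∈ Ω ∧ ∀ ε > (0:ℝ), ∀ᶠ y in 𝓝[Ω] x, ⟪v, y - x⟫ ≤ ε * ‖y - x‖}

/-- The limiting (Mordukhovich) normal cone to `Ω` at `x`. -/
def LimitingNormalCone (Ω : Set E) (x : E) : Set E :=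
  {v | ∃ xs vs : ℕ → E, (∀ k, vs k ∈ FrechetNormalCone Ω (xs k)) ∧
    Tendsto xs atTop (𝓝 x) ∧ Tendsto vs atTop (𝓝 v)}

/-- The normal cone to an unbounded set `Ω` at infinity. -/
def NormalConeAtInfty (Ω : Set E) : Set E :=
  {v | ∃ xs vs : ℕ → E, (∀ k, vs k ∈ FrechetNormalCone Ω (xs k)) ∧
    Tendsto (fun k => ‖xs k‖) atTop atTop ∧ Tendsto vs atTop (𝓝 v)}

/-- The epigraph of `f : E → ℝ ∪ {+∞}` as a subset of the (ℓ²-)product `E × ℝ`. -/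
def epiSet (f : E → EReal) : Set (WithLp 2 (E × ℝ)) :=
  {p | f (WithLp.equiv 2 (E × ℝ) p).1 ≤ ((WithLp.equiv 2 (E × ℝ) p).2 : EReal)}

/-- The point `(x, t)` of the (ℓ²-)product `E × ℝ`. -/
def mkP (x : E) (t : ℝ) : WithLp 2 (E × ℝ) := (WithLp.equiv 2 (E × ℝ)).symm (x, t)

/-- `𝒩(f)`: limits of limiting normals to `epi f` at points `(x_k, f(x_k))` with `‖x_k‖ → ∞`. -/
def NclAtInfty (f : E → EReal) : Set (E × ℝ) :=
  {q | ∃ (xs : ℕ → E) (ws : ℕ → WithLp 2 (E × ℝ)),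
    (∀ k, f (xs k) ≠ ⊤) ∧
    Tendsto (fun k => ‖xs k‖) atTop atTop ∧
    (∀ k, ws k ∈ LimitingNormalCone (epiSet f) (mkP (xs k) (f (xs k)).toReal)) ∧
    Tendsto (fun k => WithLp.equiv 2 (E × ℝ) (ws k)) atTop (𝓝 q)}

/-- The limiting subdifferential of `f` at infinity: `∂f(∞) = {u | (u,-1) ∈ 𝒩(f)}`. -/
def subInfty (f : E → EReal) : Set E := {u | (u, (-1 : ℝ)) ∈ NclAtInfty f}

/-- The singular subdifferential of `f` at infinity: `∂^∞f(∞) = {u | (u,0) ∈ 𝒩(f)}`. -/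
def singSubInfty (f : E → EReal) : Set E := {u | (u, (0 : ℝ)) ∈ NclAtInfty f}

/-- The singular subdifferential of `f` at a point `x ∈ dom f`:
`∂^∞f(x) = {v | (v,0) ∈ N((x,f(x)); epi f)}`, empty if `x ∉ dom f`. -/
def singSub (f : E → EReal) (x : E) : Set E :=
  {v | f x ≠ ⊤ ∧ mkP v 0 ∈ LimitingNormalCone (epiSet f) (mkP x (f x).toReal)}

/-- `λ∘∂f(∞)`: equals `λ • ∂f(∞)` for `λ ≠ 0` and `∂^∞f(∞)` for `λ = 0`. -/
def lamCirc (f : E → EReal) (lam : ℝ) : Set E :=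
  if lam = 0 then singSubInfty f else lam • subInfty f

/-- `f` is Lipschitz at infinity. -/
def LipschitzAtInfty (f : E → ℝ) : Prop :=
  ∃ L > (0:ℝ), ∃ R > (0:ℝ), ∀ x x' : E, R < ‖x‖ → R < ‖x'‖ → |f x - f x'| ≤ L * ‖x - x'‖

end

/-!
Let `v` be a unit Fréchet normal to `S = {g ≤ 0}` at a far point `x`. Projecting onto `S` and
using the error bound, the Fréchet inequality for `v` becomes
`⟪v, y - x⟫ ≤ ε ‖y - x‖ + 2α max(s, 0)` for `(y, s) ∈ epi g` near `(x, 0)`. Hence a minimizer of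
`-⟪v, y - x⟫ + 2α max(b, 0) + c (s - b)² + κ ‖(y, s) - (x, 0)‖²` over `(y, s) ∈ epi g` near
`(x, 0)` and `b ∈ ℝ` is interior, and minus the gradient in `(y, s)` is a Fréchet normal `N` to
`epi g` with `N.fst ≈ v` and `N.snd ∈ [-2α - O(ε), O(ε)]`; sliding the base point down to the
graph keeps it normal. Along a sequence of normals to `S` at infinity the last coordinates have a
limit point `a ≤ 0`, so `(w, ‖w‖ a) ∈ 𝒩(g)`, which lies in `λ∘∂g(∞)` for `λ = -‖w‖ a`.
-/

section FrechetNormal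

variable {E : Type*} [NormedAddCommGroup E] [InnerProductSpace ℝ E]

lemma zero_mem_frechetNormalCone {Ω : Set E} {x : E} (hx : x ∈ Ω) :
    (0 : E) ∈ FrechetNormalCone Ω x :=
  ⟨hx, fun ε hε => Eventually.of_forall fun y => by rw [inner_zero_left]; positivity⟩

lemma smul_mem_frechetNormalCone {Ω : Set E} {x v : E} {c : ℝ} (hc : 0 < c)
    (hv : v ∈ FrechetNormalCone Ω x) : c • v ∈ FrechetNormalCone Ω x := by
  refine ⟨hv.1, fun ε hε => ?_⟩
  filter_upwards [hv.2 (ε / c) (by positivity)] with y hy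
  calc ⟪c • v, y - x⟫ = c * ⟪v, y - x⟫ := real_inner_smul_left _ _ _
    _ ≤ c * (ε / c * ‖y - x‖) := by gcongr
    _ = ε * ‖y - x‖ := by field_simp

lemma frechetNormalCone_subset_limitingNormalCone (Ω : Set E) (x : E) :
    FrechetNormalCone Ω x ⊆ LimitingNormalCone Ω x :=
  fun v hv => ⟨fun _ => x, fun _ => v, fun _ => hv, tendsto_const_nhds, tendsto_const_nhds⟩

lemma smul_mem_limitingNormalCone {Ω : Set E} {x v : E} {c : ℝ} (hc : 0 < c)
    (hv : v ∈ LimitingNormalCone Ω x) : c • v ∈ LimitingNormalCone Ω x := by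
  obtain ⟨xs, vs, hvs, hxs, hlim⟩ := hv
  exact ⟨xs, fun k => c • vs k, fun k => smul_mem_frechetNormalCone hc (hvs k), hxs,
    hlim.const_smul c⟩

lemma mem_frechetNormalCone_of_inner_le_sq {Ω : Set E} {p N : E} (hp : p ∈ Ω) {C ρ : ℝ}
    (hρ : 0 < ρ) (h : ∀ q ∈ Ω, ‖q - p‖ < ρ → ⟪N, q - p⟫ ≤ C * ‖q - p‖ ^ 2) :
    N ∈ FrechetNormalCone Ω p := by
  refine ⟨hp, fun ε hε => ?_⟩
  have hball : Metric.ball p (min ρ (ε / (|C| + 1))) ∈ 𝓝[Ω] p :=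
    mem_nhdsWithin_of_mem_nhds (Metric.ball_mem_nhds _ (by positivity))
  filter_upwards [hball, self_mem_nhdsWithin] with q hq hqΩ
  rw [Metric.mem_ball, dist_eq_norm, lt_min_iff] at hq
  have hsmall : (|C| + 1) * ‖q - p‖ ≤ ε := by
    have := hq.2.le
    rwa [le_div_iff₀ (by positivity), mul_comm] at this
  calc ⟪N, q - p⟫ ≤ C * ‖q - p‖ ^ 2 := h q hqΩ hq.1
    _ ≤ ((|C| + 1) * ‖q - p‖) * ‖q - p‖ := by
        nlinarith [le_abs_self C, norm_nonneg (q - p)]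
    _ ≤ ε * ‖q - p‖ := by gcongr

lemma frechetNormalCone_add_subset {Ω : Set E} {p d : E} (hp : p ∈ Ω)
    (hΩ : ∀ q ∈ Ω, q + d ∈ Ω) : FrechetNormalCone Ω (p + d) ⊆ FrechetNormalCone Ω p := by
  intro N hN
  refine ⟨hp, fun ε hε => ?_⟩
  have hshift : Tendsto (· + d) (𝓝[Ω] p) (𝓝[Ω] (p + d)) :=
    tendsto_nhdsWithin_of_tendsto_nhds_of_eventually_within _
      ((continuous_add_const d).tendsto p |>.mono_left nhdsWithin_le_nhds)
      (eventually_mem_nhdsWithin.mono fun q hq => hΩ q hq)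
  filter_upwards [hshift.eventually (hN.2 ε hε)] with q hq
  simpa only [add_sub_add_right_eq_sub] using hq

end FrechetNormal

section Epigraph

variable {E : Type*}

@[simp] lemma mkP_fst (x : E) (t : ℝ) : (mkP x t).fst = x := rfl
@[simp] lemma mkP_snd (x : E) (t : ℝ) : (mkP x t).snd = t := rfl

lemma mem_epiSet {f : E → EReal} {p : WithLp 2 (E × ℝ)} :
    p ∈ epiSet f ↔ f p.fst ≤ (p.snd : EReal) := Iff.rfl

lemma mkP_toReal_mem_epiSet {f : E → EReal} {x : E} (hx : f x ≠ ⊤) :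
    mkP x (f x).toReal ∈ epiSet f :=
  EReal.le_coe_toReal hx

variable [NormedAddCommGroup E]

lemma norm_sq_withLp_prod (p : WithLp 2 (E × ℝ)) : ‖p‖ ^ 2 = ‖p.fst‖ ^ 2 + p.snd ^ 2 := by
  rw [WithLp.prod_norm_sq_eq_of_L2, Real.norm_eq_abs, sq_abs]

lemma isClosed_epiSet {f : E → EReal} (hf : LowerSemicontinuous f) : IsClosed (epiSet f) :=
  hf.isClosed_epigraph.preimage <|
    (by fun_prop : Continuous fun p : WithLp 2 (E × ℝ) => p.fst).prodMk
      (continuous_coe_real_ereal.comp (by fun_prop))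

lemma add_mkP_mem_epiSet {f : E → EReal} {p : WithLp 2 (E × ℝ)} (hp : p ∈ epiSet f) {c : ℝ}
    (hc : 0 ≤ c) : p + mkP 0 c ∈ epiSet f := by
  rw [mem_epiSet] at hp ⊢
  simp only [WithLp.add_fst, WithLp.add_snd, mkP_fst, mkP_snd, add_zero, EReal.coe_add]
  exact hp.trans (le_add_of_nonneg_right (by exact_mod_cast hc))

variable [InnerProductSpace ℝ E]

lemma mem_frechetNormalCone_epiSet_graph {f : E → EReal} {p N : WithLp 2 (E × ℝ)}
    (hbot : f p.fst ≠ ⊥) (hp : p ∈ epiSet f) (hN : N ∈ FrechetNormalCone (epiSet f) p) :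
    N ∈ FrechetNormalCone (epiSet f) (mkP p.fst (f p.fst).toReal) := by
  have hle : (f p.fst).toReal ≤ p.snd := EReal.toReal_le_toReal hp hbot (EReal.coe_ne_top _)
  have hgraph := mkP_toReal_mem_epiSet (ne_top_of_le_ne_top (EReal.coe_ne_top _) hp)
  have hsplit : p = mkP p.fst (f p.fst).toReal + mkP 0 (p.snd - (f p.fst).toReal) := by
    rw [WithLp.ext_iff]
    ext <;> simp
  rw [hsplit] at hN
  exact frechetNormalCone_add_subset hgraph (fun q hq => add_mkP_mem_epiSet hq (by linarith)) hN

end Epigraph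

section ProxOfMax

variable {A c : ℝ}

lemma mul_max_le_add_sq (hA : 0 ≤ A) (hc : 0 < c) (s b : ℝ) :
    A * max s 0 ≤ A * max b 0 + c * (s - b) ^ 2 + A ^ 2 / (4 * c) := by
  have hmax : max s 0 ≤ max b 0 + |s - b| := by
    refine max_le ?_ (by positivity)
    linarith [le_abs_self (s - b), le_max_left b 0]
  have hyoung : A * |s - b| ≤ c * (s - b) ^ 2 + A ^ 2 / (4 * c) := by
    have hsq : c * (s - b) ^ 2 + A ^ 2 / (4 * c) - A * |s - b|
        = (2 * c * |s - b| - A) ^ 2 / (4 * c) := by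
      rw [← sq_abs (s - b)]
      field_simp
      ring
    have : 0 ≤ (2 * c * |s - b| - A) ^ 2 / (4 * c) := by positivity
    linarith
  nlinarith [mul_le_mul_of_nonneg_left hmax hA]

lemma sub_mem_Icc_of_isMinOn_prox (hA : 0 ≤ A) (hc : 0 < c) {s b B : ℝ}
    (hs : s ∈ Icc (A / (2 * c) - B) B)
    (hmin : ∀ b' ∈ Icc (-B) B, A * max b 0 + c * (s - b) ^ 2 ≤ A * max b' 0 + c * (s - b') ^ 2) :
    s - b ∈ Icc 0 (A / (2 * c)) := by
  set e := A / (2 * c) with he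
  have hAe : A = 2 * c * e := by rw [he]; field_simp
  have he0 : 0 ≤ e := div_nonneg hA (by positivity)
  constructor
  · by_contra! hlt
    have h := hmin s ⟨by linarith [hs.1], hs.2⟩
    have hmono : A * max s 0 ≤ A * max b 0 := by gcongr; linarith
    nlinarith [mul_pos hc (mul_pos_of_neg_of_neg hlt hlt)]
  · by_contra! hlt
    have h := hmin (s - e) ⟨by linarith [hs.1], by linarith [hs.2]⟩
    have hmono : max (s - e) 0 ≤ max b 0 + (s - e - b) := by
      refine max_le (by linarith [le_max_left b 0]) (by linarith [le_max_right b 0])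
    nlinarith [mul_le_mul_of_nonneg_left hmono hA, mul_pos hc (mul_pos (sub_pos.2 hlt)
      (sub_pos.2 hlt))]

end ProxOfMax

section ErrorBound

lemma infDist_le_mul_max_of_le_coe {X : Type*} [PseudoMetricSpace X] {g : X → EReal} {S : Set X}
    {α : ℝ} (hα : 0 ≤ α) {z : X} {s : ℝ} (heb : (Metric.infDist z S : EReal) ≤ α * max (g z) 0)
    (hz : g z ≤ s) : Metric.infDist z S ≤ α * max s 0 := by
  have hmax : max (g z) 0 ≤ ((max s 0 : ℝ) : EReal) :=
    max_le (hz.trans (by exact_mod_cast le_max_left s 0)) (by exact_mod_cast le_max_right s 0)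
  have := heb.trans (mul_le_mul_of_nonneg_left hmax (by exact_mod_cast hα))
  exact_mod_cast this

variable {E : Type*} [NormedAddCommGroup E] [InnerProductSpace ℝ E]

lemma exists_ball_of_mem_frechetNormalCone {S : Set E} {x v : E} (hv : v ∈ FrechetNormalCone S x)
    {ε : ℝ} (hε : 0 < ε) : ∃ δ > 0, ∀ z ∈ S, ‖z - x‖ < δ → ⟪v, z - x⟫ ≤ ε * ‖z - x‖ := by
  obtain ⟨δ, hδ, h⟩ := Metric.eventually_nhds_iff.1 (eventually_nhdsWithin_iff.1 (hv.2 ε hε))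
  exact ⟨δ, hδ, fun z hz hzx => h (by rwa [dist_eq_norm]) hz⟩

lemma inner_le_of_forall_inner_le {S : Set E} {x v y z : E} {ε δ : ℝ} (hv : ‖v‖ ≤ 1)
    (hε : 0 ≤ ε) (hF : ∀ z ∈ S, ‖z - x‖ < δ → ⟪v, z - x⟫ ≤ ε * ‖z - x‖) (hz : z ∈ S)
    (hyz : ‖y - x‖ + ‖y - z‖ < δ) : ⟪v, y - x⟫ ≤ ε * ‖y - x‖ + (1 + ε) * ‖y - z‖ := by
  have hzx : ‖z - x‖ ≤ ‖y - x‖ + ‖y - z‖ := by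
    rw [add_comm, norm_sub_rev y z]
    exact norm_sub_le_norm_sub_add_norm_sub z y x
  have hyz' : ⟪v, y - z⟫ ≤ ‖y - z‖ :=
    (real_inner_le_norm v _).trans (mul_le_of_le_one_left (norm_nonneg _) hv)
  calc ⟪v, y - x⟫ = ⟪v, z - x⟫ + ⟪v, y - z⟫ := by rw [← inner_add_right, sub_add_sub_cancel']
    _ ≤ ε * (‖y - x‖ + ‖y - z‖) + ‖y - z‖ := by
        gcongr
        exact (hF z hz (hzx.trans_lt hyz)).trans (by gcongr)
    _ = ε * ‖y - x‖ + (1 + ε) * ‖y - z‖ := by ring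

variable [FiniteDimensional ℝ E] {g : E → EReal} {α R : ℝ}

lemma inner_le_of_errorBound (hg : LowerSemicontinuous g) (hα : 0 ≤ α)
    (heb : ∀ z : E, R < ‖z‖ → (Metric.infDist z {x | g x ≤ 0} : EReal) ≤ α * max (g z) 0)
    {x v : E} (hx : g x ≤ 0) (hv : ‖v‖ ≤ 1) {ε δ r : ℝ} (hε : 0 ≤ ε) (hε1 : ε ≤ 1)
    (hF : ∀ z ∈ {x | g x ≤ 0}, ‖z - x‖ < δ → ⟪v, z - x⟫ ≤ ε * ‖z - x‖)
    (hrδ : r * (1 + α) < δ) (hxR : R + r < ‖x‖) {p : WithLp 2 (E × ℝ)} (hp : p ∈ epiSet g)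
    (hpr : ‖p - mkP x 0‖ ≤ r) : ⟪v, p.fst - x⟫ ≤ ε * ‖p.fst - x‖ + 2 * α * max p.snd 0 := by
  have hfst : ‖p.fst - x‖ ≤ r := by
    simpa using (WithLp.norm_fst_le E (p - mkP x 0)).trans hpr
  have hsnd : max p.snd 0 ≤ r := by
    have : |p.snd| ≤ r := by simpa using (WithLp.norm_snd_le E (p - mkP x 0)).trans hpr
    exact max_le ((le_abs_self _).trans this) ((abs_nonneg _).trans this)
  have hpR : R < ‖p.fst‖ := by
    linarith [norm_sub_norm_le x p.fst, norm_sub_rev x p.fst]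
  obtain ⟨z, hz, hzd⟩ := (hg.isClosed_preimage 0).exists_infDist_eq_dist ⟨x, hx⟩ p.fst
  have hdist : ‖p.fst - z‖ ≤ α * max p.snd 0 := by
    rw [← dist_eq_norm, ← hzd]
    exact infDist_le_mul_max_of_le_coe hα (heb _ hpR) hp
  have hαr : α * max p.snd 0 ≤ α * r := by gcongr
  calc ⟪v, p.fst - x⟫ ≤ ε * ‖p.fst - x‖ + (1 + ε) * ‖p.fst - z‖ :=
        inner_le_of_forall_inner_le hv hε hF hz (by nlinarith)
    _ ≤ ε * ‖p.fst - x‖ + 2 * α * max p.snd 0 := by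
        nlinarith [norm_nonneg (p.fst - z)]

end ErrorBound

section Penalty

variable {E : Type*} [NormedAddCommGroup E] [InnerProductSpace ℝ E]

lemma inner_withLp_prod (p q : WithLp 2 (E × ℝ)) : ⟪p, q⟫ = ⟪p.fst, q.fst⟫ + p.snd * q.snd := by
  simp [WithLp.prod_inner_apply, mul_comm]

/-- The variable `b` decouples the nonsmooth term `A max(·, 0)` from the epigraph constraint, so
that `p ↦ epiPenalty v x A c κ p b` is a quadratic function. -/
noncomputable def epiPenalty (v x : E) (A c κ : ℝ) (p : WithLp 2 (E × ℝ)) (b : ℝ) : ℝ :=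
  -⟪v, p.fst - x⟫ + A * max b 0 + c * (p.snd - b) ^ 2 + κ * ‖p - mkP x 0‖ ^ 2

def epiPenaltyNegGrad (v x : E) (c κ : ℝ) (p : WithLp 2 (E × ℝ)) (b : ℝ) : WithLp 2 (E × ℝ) :=
  mkP (v - (2 * κ) • (p.fst - x)) (-(2 * c * (p.snd - b)) - 2 * κ * p.snd)

lemma epiPenalty_sub_epiPenalty (v x : E) (A c κ : ℝ) (p q : WithLp 2 (E × ℝ)) (b : ℝ) :
    epiPenalty v x A c κ q b - epiPenalty v x A c κ p b =
      -⟪epiPenaltyNegGrad v x c κ p b, q - p⟫ + c * (q.snd - p.snd) ^ 2 + κ * ‖q - p‖ ^ 2 := by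
  have hsplit : q.fst - x = (q.fst - p.fst) + (p.fst - x) := by abel
  simp only [epiPenalty, epiPenaltyNegGrad, norm_sq_withLp_prod, inner_withLp_prod,
    WithLp.sub_fst, WithLp.sub_snd, mkP_fst, mkP_snd, sub_zero, hsplit, norm_add_sq_real,
    inner_add_right, inner_sub_left, real_inner_smul_left, real_inner_comm (p.fst - x)]
  ring

lemma inner_le_of_epiPenalty_le {v x : E} {A c κ : ℝ} (hc : 0 ≤ c) {p q : WithLp 2 (E × ℝ)}
    {b : ℝ} (hle : epiPenalty v x A c κ p b ≤ epiPenalty v x A c κ q b) :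
    ⟪epiPenaltyNegGrad v x c κ p b, q - p⟫ ≤ (c + κ) * ‖q - p‖ ^ 2 := by
  have hid := epiPenalty_sub_epiPenalty v x A c κ p q b
  have hsnd : (q.snd - p.snd) ^ 2 ≤ ‖q - p‖ ^ 2 := by
    rw [norm_sq_withLp_prod, WithLp.sub_snd]
    linarith [sq_nonneg ‖(q - p).fst‖]
  nlinarith [mul_le_mul_of_nonneg_left hsnd hc]

lemma epiPenaltyNegGrad_bounds {v x : E} {c κ r A : ℝ} (hc : 0 < c) (hκ : 0 ≤ κ)
    {p : WithLp 2 (E × ℝ)} {b : ℝ} (hpr : ‖p - mkP x 0‖ ≤ r)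
    (hb : p.snd - b ∈ Icc 0 (A / (2 * c))) :
    ‖(epiPenaltyNegGrad v x c κ p b).fst - v‖ ≤ 2 * κ * r ∧
      (epiPenaltyNegGrad v x c κ p b).snd ∈ Icc (-A - 2 * κ * r) (2 * κ * r) := by
  have hfst : ‖p.fst - x‖ ≤ r := by simpa using (WithLp.norm_fst_le E (p - mkP x 0)).trans hpr
  have hsnd : |p.snd| ≤ r := by simpa using (WithLp.norm_snd_le E (p - mkP x 0)).trans hpr
  have hcb : 2 * c * (p.snd - b) ≤ A := by
    have := mul_le_mul_of_nonneg_left hb.2 (by positivity : (0:ℝ) ≤ 2 * c)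
    rwa [mul_div_cancel₀ _ (by positivity)] at this
  have hκs : |2 * κ * p.snd| ≤ 2 * κ * r := by
    rw [abs_mul, abs_of_nonneg (by positivity : (0:ℝ) ≤ 2 * κ)]
    gcongr
  refine ⟨?_, ?_, ?_⟩
  · simp only [epiPenaltyNegGrad, mkP_fst, sub_sub_cancel_left, norm_neg, norm_smul,
      Real.norm_of_nonneg (by positivity : (0:ℝ) ≤ 2 * κ)]
    gcongr
  · simp only [epiPenaltyNegGrad, mkP_snd]
    nlinarith [abs_le.1 hκs, mul_nonneg hc.le hb.1]
  · simp only [epiPenaltyNegGrad, mkP_snd]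
    nlinarith [abs_le.1 hκs, mul_nonneg hc.le hb.1]

variable [FiniteDimensional ℝ E]

/-- By `hP` and `hκ`, the weight `κ` keeps a minimizer over `(Ω ∩ closedBall (x, 0) r) × [-B, B]`
inside the open ball, so that it is a local minimizer on `Ω`. -/
lemma exists_isMinOn_epiPenalty {Ω : Set (WithLp 2 (E × ℝ))} (hΩ : IsClosed Ω) {v x : E}
    (hx : mkP x 0 ∈ Ω) {ε r A c κ : ℝ} (hε : 0 ≤ ε) (hr : 0 < r) (hA : 0 ≤ A) (hc : 0 < c)
    (hκ : ε * r + A ^ 2 / (4 * c) < κ * r ^ 2)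
    (hP : ∀ p ∈ Ω, ‖p - mkP x 0‖ ≤ r → ⟪v, p.fst - x⟫ ≤ ε * ‖p.fst - x‖ + A * max p.snd 0) :
    ∃ p ∈ Ω, ∃ b : ℝ, ‖p - mkP x 0‖ < r ∧ p.snd - b ∈ Icc 0 (A / (2 * c)) ∧
      ∀ q ∈ Ω, ‖q - mkP x 0‖ ≤ r → epiPenalty v x A c κ p b ≤ epiPenalty v x A c κ q b := by
  set B := r + A / (2 * c)
  have hB : 0 ≤ A / (2 * c) := div_nonneg hA (by positivity)
  have hK : IsCompact ((Ω ∩ Metric.closedBall (mkP x 0) r) ×ˢ Icc (-B) B) :=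
    ((isCompact_closedBall _ r).inter_left hΩ).prod isCompact_Icc
  have hcont : Continuous fun q : WithLp 2 (E × ℝ) × ℝ => epiPenalty v x A c κ q.1 q.2 := by
    unfold epiPenalty; fun_prop
  have hx0 : (mkP x 0, (0:ℝ)) ∈ (Ω ∩ Metric.closedBall (mkP x 0) r) ×ˢ Icc (-B) B :=
    ⟨⟨hx, Metric.mem_closedBall_self hr.le⟩, by constructor <;> linarith⟩
  obtain ⟨⟨p, b⟩, ⟨⟨hpΩ, hpr⟩, hbB⟩, hmin⟩ := hK.exists_isMinOn ⟨_, hx0⟩ hcont.continuousOn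
  rw [isMinOn_iff] at hmin
  rw [Metric.mem_closedBall, dist_eq_norm] at hpr
  have hfst : ‖p.fst - x‖ ≤ ‖p - mkP x 0‖ := by simpa using WithLp.norm_fst_le E (p - mkP x 0)
  have hsnd : |p.snd| ≤ ‖p - mkP x 0‖ := by simpa using WithLp.norm_snd_le E (p - mkP x 0)
  have hloc : ‖p - mkP x 0‖ < r := by
    have hval : epiPenalty v x A c κ p b ≤ 0 := by simpa [epiPenalty] using hmin _ hx0
    have hyoung := mul_max_le_add_sq hA hc p.snd b
    have hlin := hP p hpΩ hpr
    have hεfst : ε * ‖p.fst - x‖ ≤ ε * r := by gcongr; exact hfst.trans hpr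
    unfold epiPenalty at hval
    refine lt_of_le_of_ne hpr fun hr' => ?_
    rw [hr'] at hval
    linarith
  refine ⟨p, hpΩ, b, hloc, sub_mem_Icc_of_isMinOn_prox hA hc (B := B) ?_ fun b' hb' => ?_,
    fun q hq hqr => ?_⟩
  · have := abs_le.1 (hsnd.trans hloc.le)
    constructor <;> linarith
  · have := hmin (p, b') ⟨⟨hpΩ, by rwa [Metric.mem_closedBall, dist_eq_norm]⟩, hb'⟩
    simp only [epiPenalty] at this
    linarith
  · exact hmin (q, b) ⟨⟨hq, by rwa [Metric.mem_closedBall, dist_eq_norm]⟩, hbB⟩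

end Penalty

section AtInfinity

variable {E : Type*} [NormedAddCommGroup E] [InnerProductSpace ℝ E] {f : E → EReal}

lemma smul_mem_nclAtInfty {u : E} {s c : ℝ} (hc : 0 < c) (h : (u, s) ∈ NclAtInfty f) :
    (c • u, c * s) ∈ NclAtInfty f := by
  obtain ⟨xs, ws, hdom, hxs, hws, hlim⟩ := h
  exact ⟨xs, fun k => c • ws k, hdom, hxs, fun k => smul_mem_limitingNormalCone hc (hws k),
    by simpa using hlim.const_smul c⟩

lemma zero_mem_singSubInfty {xs : ℕ → E} (hdom : ∀ k, f (xs k) ≠ ⊤)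
    (hxs : Tendsto (fun k => ‖xs k‖) atTop atTop) : 0 ∈ singSubInfty f :=
  ⟨xs, fun _ => 0, hdom, hxs, fun k => frechetNormalCone_subset_limitingNormalCone _ _
    (zero_mem_frechetNormalCone (mkP_toReal_mem_epiSet (hdom k))), by
    simp [Prod.zero_eq_mk]⟩

lemma mem_smul_subInfty_union_singSubInfty {u : E} {a : ℝ} (h : (u, a) ∈ NclAtInfty f)
    (ha : a ≤ 0) :
    u ∈ {w | ∃ lam : ℝ, 0 < lam ∧ ∃ u ∈ subInfty f, w = lam • u} ∪ singSubInfty f := by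
  rcases ha.eq_or_lt with rfl | ha
  · exact Or.inr h
  · refine Or.inl ⟨-a, by linarith, (-a)⁻¹ • u, ?_, (smul_inv_smul₀ (by linarith) u).symm⟩
    have := smul_mem_nclAtInfty (inv_pos.2 (neg_pos.2 ha)) h
    rwa [inv_mul_eq_div, div_neg, div_self ha.ne] at this

lemma exists_nonpos_mem_nclAtInfty {ys : ℕ → E} {Ns : ℕ → WithLp 2 (E × ℝ)} {u : E} {M : ℝ}
    {ε : ℕ → ℝ} (hdom : ∀ k, f (ys k) ≠ ⊤) (hys : Tendsto (fun k => ‖ys k‖) atTop atTop)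
    (hN : ∀ k, Ns k ∈ FrechetNormalCone (epiSet f) (mkP (ys k) (f (ys k)).toReal))
    (hfst : Tendsto (fun k => (Ns k).fst) atTop (𝓝 u)) (hsnd : ∀ k, (Ns k).snd ∈ Icc (-M) M)
    (hsnd_le : ∀ k, (Ns k).snd ≤ ε k) (hε : Tendsto ε atTop (𝓝 0)) :
    ∃ a ≤ 0, (u, a) ∈ NclAtInfty f := by
  obtain ⟨a, -, φ, hφ, ha⟩ := tendsto_subseq_of_bounded (Metric.isBounded_Icc (-M) M) hsnd
  refine ⟨a, le_of_tendsto_of_tendsto' ha (hε.comp hφ.tendsto_atTop) fun k => hsnd_le (φ k),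
    ys ∘ φ, Ns ∘ φ, fun k => hdom (φ k), hys.comp hφ.tendsto_atTop,
    fun k => frechetNormalCone_subset_limitingNormalCone _ _ (hN (φ k)), ?_⟩
  exact ((hfst.comp hφ.tendsto_atTop).prodMk_nhds ha).congr fun k => rfl

end AtInfinity

section Core

variable {E : Type*} [NormedAddCommGroup E] [InnerProductSpace ℝ E] [FiniteDimensional ℝ E]
  {g : E → EReal} {α R : ℝ}

lemma exists_frechetNormal_epiSet_near (hg : LowerSemicontinuous g) (hgbot : ∀ x, g x ≠ ⊥)
    (hα : 0 < α)
    (heb : ∀ z : E, R < ‖z‖ → (Metric.infDist z {x | g x ≤ 0} : EReal) ≤ α * max (g z) 0)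
    {x v : E} (hxR : R + 1 < ‖x‖) (hv : ‖v‖ = 1) (hvN : v ∈ FrechetNormalCone {x | g x ≤ 0} x)
    {ε : ℝ} (hε : 0 < ε) (hε1 : ε ≤ 1) :
    ∃ (y : E) (N : WithLp 2 (E × ℝ)), ‖y - x‖ ≤ 1 ∧ g y ≠ ⊤ ∧
      N ∈ FrechetNormalCone (epiSet g) (mkP y (g y).toReal) ∧
      ‖N.fst - v‖ ≤ 8 * ε ∧ N.snd ∈ Icc (-(2 * α) - 8 * ε) (8 * ε) := by
  obtain ⟨δ, hδ, hF⟩ := exists_ball_of_mem_frechetNormalCone hvN hε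
  set r := min 1 (δ / (2 * (1 + α)))
  have hr : 0 < r := by positivity
  have hr1 : r ≤ 1 := min_le_left _ _
  have hrδ : r * (1 + α) < δ := by
    calc r * (1 + α) ≤ δ / (2 * (1 + α)) * (1 + α) := by gcongr; exact min_le_right _ _
      _ = δ / 2 := by field_simp
      _ < δ := by linarith
  have hx0 : mkP x 0 ∈ epiSet g := by simpa [mem_epiSet] using hvN.1
  have hc : 0 < α ^ 2 / (ε * r) := by positivity
  have hκ : ε * r + (2 * α) ^ 2 / (4 * (α ^ 2 / (ε * r))) < 4 * ε / r * r ^ 2 := by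
    have : (2 * α) ^ 2 / (4 * (α ^ 2 / (ε * r))) = ε * r := by field_simp; ring
    rw [this, pow_two, ← mul_assoc, div_mul_cancel₀ _ hr.ne']
    nlinarith [mul_pos hε hr]
  obtain ⟨p, hp, b, hpr, hb, hmin⟩ := exists_isMinOn_epiPenalty (isClosed_epiSet hg) hx0 hε.le hr
    (by positivity) hc hκ fun p hp hpr =>
      inner_le_of_errorBound hg hα.le heb hvN.1 hv.le hε.le hε1 hF hrδ (by linarith) hp hpr
  set N := epiPenaltyNegGrad v x (α ^ 2 / (ε * r)) (4 * ε / r) p b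
  have hN : N ∈ FrechetNormalCone (epiSet g) p := by
    refine mem_frechetNormalCone_of_inner_le_sq hp (sub_pos.2 hpr) fun q hq hqp =>
      inner_le_of_epiPenalty_le hc.le (hmin q hq ?_)
    linarith [norm_sub_le_norm_sub_add_norm_sub q p (mkP x 0)]
  have h8 : 2 * (4 * ε / r) * r = 8 * ε := by field_simp; ring
  obtain ⟨hfst, hsnd⟩ :=
    epiPenaltyNegGrad_bounds (v := v) (κ := 4 * ε / r) hc (by positivity) hpr.le hb
  rw [h8] at hfst hsnd
  refine ⟨p.fst, N, ?_, ne_top_of_le_ne_top (EReal.coe_ne_top _) hp,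
    mem_frechetNormalCone_epiSet_graph (hgbot _) hp hN, hfst, hsnd⟩
  calc ‖p.fst - x‖ ≤ ‖p - mkP x 0‖ := by simpa using WithLp.norm_fst_le E (p - mkP x 0)
    _ ≤ 1 := hpr.le.trans hr1

lemma exists_nonpos_mem_nclAtInfty_of_unit_normals (hg : LowerSemicontinuous g)
    (hgbot : ∀ x, g x ≠ ⊥) (hα : 0 < α)
    (heb : ∀ z : E, R < ‖z‖ → (Metric.infDist z {x | g x ≤ 0} : EReal) ≤ α * max (g z) 0)
    {xs vs : ℕ → E} {u : E} (hvN : ∀ k, vs k ∈ FrechetNormalCone {x | g x ≤ 0} (xs k))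
    (hv : ∀ k, ‖vs k‖ = 1) (hxR : ∀ k, R + 1 < ‖xs k‖)
    (hxs : Tendsto (fun k => ‖xs k‖) atTop atTop) (hvs : Tendsto vs atTop (𝓝 u)) :
    ∃ a ≤ 0, (u, a) ∈ NclAtInfty g := by
  have hε : ∀ k : ℕ, 0 < 1 / ((k : ℝ) + 1) ∧ 1 / ((k : ℝ) + 1) ≤ 1 := fun k =>
    ⟨by positivity, div_le_one_of_le₀ (by linarith [k.cast_nonneg (α := ℝ)]) (by positivity)⟩
  choose ys Ns hyx hdom hN hfst hsnd using fun k =>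
    exists_frechetNormal_epiSet_near hg hgbot hα heb (hxR k) (hv k) (hvN k) (hε k).1 (hε k).2
  have hε0 : Tendsto (fun k : ℕ => 8 * (1 / ((k : ℝ) + 1))) atTop (𝓝 0) := by
    simpa using tendsto_one_div_add_atTop_nhds_zero_nat.const_mul (8 : ℝ)
  refine exists_nonpos_mem_nclAtInfty (M := 2 * α + 8) hdom ?_ hN ?_
    (fun k => ⟨by linarith [(hsnd k).1, (hε k).2], by linarith [(hsnd k).2, (hε k).2]⟩)
    (fun k => (hsnd k).2) hε0
  · refine tendsto_atTop_mono (fun k => ?_) (tendsto_atTop_add_const_right _ (-1) hxs)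
    linarith [norm_sub_norm_le (xs k) (ys k), norm_sub_rev (xs k) (ys k), hyx k]
  · refine hvs.congr_dist (squeeze_zero (fun _ => dist_nonneg) (fun k => ?_) hε0)
    rw [dist_eq_norm, norm_sub_rev]
    exact hfst k

end Core

theorem normalConeAtInfty_upper_estimate_general {n : ℕ} (g : EuclideanSpace ℝ (Fin n) → EReal)
    (hg : LowerSemicontinuous g) (hgbot : ∀ x, g x ≠ ⊥)
    (S : Set (EuclideanSpace ℝ (Fin n))) (hS : S = {x | g x ≤ 0})
    (heb : ∃ α > (0:ℝ), ∃ R > (0:ℝ), ∀ x : EuclideanSpace ℝ (Fin n), R < ‖x‖ →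
      (Metric.infDist x S : EReal) ≤ (α : EReal) * max (g x) 0) :
    NormalConeAtInfty S ⊆
      {w | ∃ lam : ℝ, 0 < lam ∧ ∃ u ∈ subInfty g, w = lam • u} ∪ singSubInfty g := by
  subst hS
  obtain ⟨α, hα, R, -, heb⟩ := heb
  rintro w ⟨xs, vs, hvN, hxs, hvs⟩
  have hdom k : g (xs k) ≠ ⊤ := ne_top_of_le_ne_top EReal.zero_ne_top (hvN k).1
  rcases eq_or_ne w 0 with rfl | hw
  · exact Or.inr (zero_mem_singSubInfty hdom hxs)
  obtain ⟨K, hK⟩ := eventually_atTop.1 ((hxs.eventually_gt_atTop (R + 1)).and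
    (hvs.eventually (eventually_ne_nhds hw)))
  have hshift : Tendsto (· + K) atTop atTop := tendsto_add_atTop_nat K
  obtain ⟨a, ha, hmem⟩ := exists_nonpos_mem_nclAtInfty_of_unit_normals hg hgbot hα heb
    (xs := fun k => xs (k + K)) (vs := fun k => ‖vs (k + K)‖⁻¹ • vs (k + K))
    (fun k => smul_mem_frechetNormalCone (by simpa using (hK _ le_add_self).2) (hvN _))
    (fun k => norm_smul_inv_norm (hK _ le_add_self).2) (fun k => (hK _ le_add_self).1)
    (hxs.comp hshift) (((hvs.norm.inv₀ (norm_ne_zero_iff.2 hw)).smul hvs).comp hshift)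
  simpa [hw] using mem_smul_subInfty_union_singSubInfty
    (smul_mem_nclAtInfty (norm_pos_iff.2 hw) hmem)
    (mul_nonpos_of_nonneg_of_nonpos (norm_nonneg w) ha)

/-- Proposition 4.3: if `S = {x : g(x) ≤ 0}` has an error bound at
infinity then `N(∞;S) ⊆ (⋃_{λ>0} λ·∂g(∞)) ∪ ∂^∞g(∞)`. -/
theorem normalConeAtInfty_upper_estimate {n : ℕ} (g : EuclideanSpace ℝ (Fin n) → EReal)
    (hg : LowerSemicontinuous g) (hgbot : ∀ x, g x ≠ ⊥)
    (hdomunbdd : ¬ Bornology.IsBounded {x | g x ≠ ⊤})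
    (S : Set (EuclideanSpace ℝ (Fin n))) (hS : S = {x | g x ≤ 0})
    (hSne : S.Nonempty) (hScl : IsClosed S) (hSunbdd : ¬ Bornology.IsBounded S)
    (heb : ∃ α > (0:ℝ), ∃ R > (0:ℝ), ∀ x : EuclideanSpace ℝ (Fin n), R < ‖x‖ →
      (Metric.infDist x S : EReal) ≤ (α : EReal) * max (g x) 0) :
    NormalConeAtInfty S ⊆
      {w | ∃ lam : ℝ, 0 < lam ∧ ∃ u ∈ subInfty g, w = lam • u} ∪ singSubInfty g :=
  normalConeAtInfty_upper_estimate_general g hg hgbot S hS heb
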